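/- Let N, n, m, p, q ≥ 1, let A ∈ ℝ^{N×N}, B₀ ∈ ℝ^{N×m}, B̃ ∈ ℝ^{N×(mN)}, C ∈ ℝ^{q×N}, D ∈ ℝ^{q×m}, D̃ ∈ ℝ^{q×(mN)}, D_w ∈ ℝ^{q×p}, S_w ∈ ℝ^{p×q}; let P ∈ ℝ^{N×N} be symmetric positive definite, Q_w ∈ ℝ^{p×p} symmetric, R_w ∈ ℝ^{q×q} symmetric positive semidefinite, ρ ≥ 0, η ≥ 0, c_x > 0, c_u > 0; let K : ℝ^N → ℝ^{m×N}, τ : ℝ^N → (0,∞), λ : ℝ^N → (0,∞), B_w : ℝ^N → ℝ^{N×p} be functions, and for z ∈ ℝ^N set A_K(z) = A + B₀·K(z) + B̃·(K(z) ⊗ z) and C_K(z) = C + D·K(z) + D̃·(K(z) ⊗ z). Assume that for every z ∈ ℝ^N the symmetric matrix M(z) + E(z)ᵀ·Δ(z)·E(z) is negative semidefinite, where M(z) = [[P⁻¹A_K(z) + A_K(z)ᵀP⁻¹ + ρP⁻², P⁻¹, P⁻¹B_w(z) + (1/λ(z))C_K(z)ᵀS_wᵀ], [P⁻¹, −(1/τ(z))I_N,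 0], [B_w(z)ᵀP⁻¹ + (1/λ(z))S_wC_K(z), 0, (1/λ(z))(Q_w + S_wD_w + D_wᵀS_wᵀ) + (η/λ(z)²)I_p]], E(z) = [[I_N, 0, 0], [K(z), 0, 0], [C_K(z), 0, D_w]], and Δ(z) = blkdiag((2c_x²/τ(z))I_N, (2c_u²/τ(z))I_m, (1/λ(z))R_w). Let Φ̂ : ℝⁿ → ℝ^N, and let x : [0,∞) → ℝⁿ, w : [0,∞) → ℝ^p, r : [0,∞) → ℝ^N be such that t ↦ Φ̂(x(t)) is differentiable with derivative (d/dt)Φ̂(x(t)) = A_K(Φ̂(x(t)))·Φ̂(x(t)) + r(t) + B_w(Φ̂(x(t)))·w(t), and ‖r(t)‖ ≤ c_x‖Φ̂(x(t))‖ + c_u‖K(Φ̂(x(t)))·Φ̂(x(t))‖ for all t ≥ 0. Define y(t) = C_K(Φ̂(x(t)))·Φ̂(x(t)) + D_w·w(t). Then the function V(t) = Φ̂(x(t))ᵀP⁻¹Φ̂(x(t)) is differentiable and satisfies, for all t ≥ 0, V′(t) ≤ −ρ·Φ̂(x(t))ᵀP⁻²Φ̂(x(t)) − (η/λ(Φ̂(x(t)))²)·‖w(t)‖²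 − (1/λ(Φ̂(x(t))))·(w(t)ᵀQ_w w(t) + 2·w(t)ᵀS_w y(t) + y(t)ᵀR_w y(t)). -/

import Mathlib

/-!
At `ξ = (z, r, w)` with `z = Φ̂(x(t))`, `r = r(t)`, `w = w(t)`, the quadratic form of the LMI
matrix `M(z) + E(z)ᵀ Δ(z) E(z)` equals, since `E ξ = (z, K z, y)` and `P⁻¹` is symmetric,
`V'(t) + ρ zᵀP⁻²z + (η/λ²)‖w‖² + s(w, y)/λ + (2c_x²‖z‖² + 2c_u²‖K z‖² - ‖r‖²)/τ`.
The LMI makes this `≤ 0`, and the last summand is `≥ 0` because the residual bound gives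
`‖r‖² ≤ (c_x‖z‖ + c_u‖K z‖)² ≤ 2c_x²‖z‖² + 2c_u²‖K z‖²` (an S-procedure step).
-/

open Matrix

/-- The Euclidean norm of a vector in `ℝ^k`. -/
noncomputable def eucNorm {k : ℕ} (v : Fin k → ℝ) : ℝ :=
  ‖(EuclideanSpace.equiv (Fin k) ℝ).symm v‖

/-- A real matrix is negative semidefinite if it is symmetric (Hermitian) and its
quadratic form is nonpositive. -/
def NegSemidef {k : Type*} [Fintype k] (M : Matrix k k ℝ) : Prop :=
  M.IsHermitian ∧ ∀ v : k → ℝ, v ⬝ᵥ M.mulVec v ≤ 0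

/-- The Kronecker product `M ⊗ z` of a matrix `M ∈ ℝ^{m×N}` with a column vector
`z ∈ ℝ^N`, yielding an `(mN) × N` matrix (rows indexed by `Fin m × Fin N`). -/
def kronMV {m N : ℕ} (M : Matrix (Fin m) (Fin N) ℝ) (z : Fin N → ℝ) :
    Matrix (Fin m × Fin N) (Fin N) ℝ :=
  Matrix.of fun p j => M p.1 j * z p.2

/-- A 3×3 block matrix with block row sizes `α`, `β`, `γ` and
block column sizes `α'`, `β'`, `γ'`. -/
def blk33 {α β γ α' β' γ' : Type*}
    (A11 : Matrix α α' ℝ) (A12 : Matrix α β' ℝ) (A13 : Matrix α γ' ℝ)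
    (A21 : Matrix β α' ℝ) (A22 : Matrix β β' ℝ) (A23 : Matrix β γ' ℝ)
    (A31 : Matrix γ α' ℝ) (A32 : Matrix γ β' ℝ) (A33 : Matrix γ γ' ℝ) :
    Matrix ((α ⊕ β) ⊕ γ) ((α' ⊕ β') ⊕ γ') ℝ :=
  Matrix.fromBlocks (Matrix.fromBlocks A11 A12 A21 A22) (Matrix.fromRows A13 A23)
    (Matrix.fromCols A31 A32) A33

lemma eucNorm_sq {k : ℕ} (v : Fin k → ℝ) : eucNorm v ^ 2 = v ⬝ᵥ v := by
  rw [eucNorm, EuclideanSpace.norm_eq, Real.sq_sqrt (by positivity)]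
  simp [dotProduct, sq]

lemma dotProduct_self_le_of_eucNorm_le_add {k l l' : ℕ} {r : Fin k → ℝ} {u : Fin l → ℝ}
    {v : Fin l' → ℝ} {a b : ℝ} (h : eucNorm r ≤ a * eucNorm u + b * eucNorm v) :
    r ⬝ᵥ r ≤ 2 * a ^ 2 * (u ⬝ᵥ u) + 2 * b ^ 2 * (v ⬝ᵥ v) := by
  have hr : 0 ≤ eucNorm r := norm_nonneg _
  rw [← eucNorm_sq, ← eucNorm_sq, ← eucNorm_sq]
  nlinarith [sq_nonneg (a * eucNorm u - b * eucNorm v)]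

section Blocks

variable {α β γ α' β' γ' : Type*} [Fintype α'] [Fintype β'] [Fintype γ']

lemma blk33_mulVec_sumElim
    (A11 : Matrix α α' ℝ) (A12 : Matrix α β' ℝ) (A13 : Matrix α γ' ℝ)
    (A21 : Matrix β α' ℝ) (A22 : Matrix β β' ℝ) (A23 : Matrix β γ' ℝ)
    (A31 : Matrix γ α' ℝ) (A32 : Matrix γ β' ℝ) (A33 : Matrix γ γ' ℝ)
    (a : α' → ℝ) (b : β' → ℝ) (c : γ' → ℝ) :
    blk33 A11 A12 A13 A21 A22 A23 A31 A32 A33 *ᵥ Sum.elim (Sum.elim a b) c =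
      Sum.elim (Sum.elim (A11 *ᵥ a + A12 *ᵥ b + A13 *ᵥ c) (A21 *ᵥ a + A22 *ᵥ b + A23 *ᵥ c))
        (A31 *ᵥ a + A32 *ᵥ b + A33 *ᵥ c) := by
  simp only [blk33, fromBlocks_mulVec, fromRows_mulVec]
  ext ((i | i) | i) <;> simp

lemma sumElim_dotProduct_blk33_mulVec_sumElim [Fintype α] [Fintype β] [Fintype γ]
    (A11 : Matrix α α' ℝ) (A12 : Matrix α β' ℝ) (A13 : Matrix α γ' ℝ)
    (A21 : Matrix β α' ℝ) (A22 : Matrix β β' ℝ) (A23 : Matrix β γ' ℝ)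
    (A31 : Matrix γ α' ℝ) (A32 : Matrix γ β' ℝ) (A33 : Matrix γ γ' ℝ)
    (a' : α → ℝ) (b' : β → ℝ) (c' : γ → ℝ) (a : α' → ℝ) (b : β' → ℝ) (c : γ' → ℝ) :
    Sum.elim (Sum.elim a' b') c' ⬝ᵥ
        blk33 A11 A12 A13 A21 A22 A23 A31 A32 A33 *ᵥ Sum.elim (Sum.elim a b) c =
      a' ⬝ᵥ (A11 *ᵥ a + A12 *ᵥ b + A13 *ᵥ c) + b' ⬝ᵥ (A21 *ᵥ a + A22 *ᵥ b + A23 *ᵥ c) +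
        c' ⬝ᵥ (A31 *ᵥ a + A32 *ᵥ b + A33 *ᵥ c) := by
  rw [blk33_mulVec_sumElim, sumElim_dotProduct_sumElim, sumElim_dotProduct_sumElim]

end Blocks

lemma Matrix.IsSymm.dotProduct_mulVec_comm {ι : Type*} [Fintype ι] {M : Matrix ι ι ℝ}
    (hM : M.IsSymm) (u v : ι → ℝ) : u ⬝ᵥ M *ᵥ v = v ⬝ᵥ M *ᵥ u := by
  rw [dotProduct_mulVec, ← mulVec_transpose, hM.eq, dotProduct_comm]

lemma HasDerivWithinAt.dotProduct_mulVec_self {ι : Type*} [Fintype ι] {M : Matrix ι ι ℝ}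
    (hM : M.IsSymm) {f : ℝ → ι → ℝ} {v : ι → ℝ} {s : Set ℝ} {t : ℝ}
    (hf : HasDerivWithinAt f v s t) :
    HasDerivWithinAt (fun u => f u ⬝ᵥ M *ᵥ f u) (2 * (f t ⬝ᵥ M *ᵥ v)) s t := by
  have hfi : ∀ i, HasDerivWithinAt (fun u => f u i) (v i) s t := hasDerivWithinAt_pi.mp hf
  have hsum : HasDerivWithinAt (fun u => ∑ i, ∑ j, f u i * (M i j * f u j))
      (∑ i, ∑ j, (v i * (M i j * f t j) + f t i * (M i j * v j))) s t :=
    .fun_sum fun i _ => .fun_sum fun j _ => (hfi i).mul ((hfi j).const_mul (M i j))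
  convert hsum using 1
  · ext u
    simp [dotProduct, mulVec, Finset.mul_sum]
  · rw [two_mul]
    nth_rw 1 [hM.dotProduct_mulVec_comm]
    simp [dotProduct, mulVec, Finset.mul_sum, Finset.sum_add_distrib]

section DissipationLMI

variable {ι κ π χ : Type*}

section Output

variable [Fintype ι] [Fintype π] [DecidableEq ι]

def lmiOutput (K : Matrix κ ι ℝ) (CK : Matrix χ ι ℝ) (Dw : Matrix χ π ℝ) :
    Matrix ((ι ⊕ κ) ⊕ χ) ((ι ⊕ ι) ⊕ π) ℝ :=
  blk33 1 0 0 K 0 0 CK 0 Dw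

lemma lmiOutput_mulVec_sumElim
    {K : Matrix κ ι ℝ} {CK : Matrix χ ι ℝ} {Dw : Matrix χ π ℝ}
    (z r : ι → ℝ) (w : π → ℝ) :
    lmiOutput K CK Dw *ᵥ Sum.elim (Sum.elim z r) w =
      Sum.elim (Sum.elim z (K *ᵥ z)) (CK *ᵥ z + Dw *ᵥ w) := by
  rw [lmiOutput, blk33_mulVec_sumElim]
  simp

end Output

variable [Fintype ι] [Fintype κ] [Fintype π] [Fintype χ] [DecidableEq ι] [DecidableEq κ]
  [DecidableEq π]

noncomputable def lmiCore (Pinv AK : Matrix ι ι ℝ) (Bw : Matrix ι π ℝ) (CK : Matrix χ ι ℝ)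
    (Dw : Matrix χ π ℝ) (Sw : Matrix π χ ℝ) (Qw : Matrix π π ℝ) (ρ η τ lam : ℝ) :
    Matrix ((ι ⊕ ι) ⊕ π) ((ι ⊕ ι) ⊕ π) ℝ :=
  blk33
    (Pinv * AK + AKᵀ * Pinv + ρ • (Pinv * Pinv)) Pinv (Pinv * Bw + (1 / lam) • (CKᵀ * Swᵀ))
    Pinv ((-(1 / τ)) • (1 : Matrix ι ι ℝ)) 0
    (Bwᵀ * Pinv + (1 / lam) • (Sw * CK)) 0
      ((1 / lam) • (Qw + Sw * Dw + Dwᵀ * Swᵀ) + (η / lam ^ 2) • (1 : Matrix π π ℝ))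

noncomputable def lmiWeight (Rw : Matrix χ χ ℝ) (cx cu τ lam : ℝ) :
    Matrix ((ι ⊕ κ) ⊕ χ) ((ι ⊕ κ) ⊕ χ) ℝ :=
  blk33 ((2 * cx ^ 2 / τ) • 1) 0 0 0 ((2 * cu ^ 2 / τ) • 1) 0 0 0 ((1 / lam) • Rw)

/-- `M + Eᵀ Δ E` of the LMI at a fixed `z`, where `M = lmiCore`, `E = lmiOutput`, `Δ = lmiWeight`
and `Pinv` stands for `P⁻¹`. -/
noncomputable def dissipationLMI (Pinv AK : Matrix ι ι ℝ) (Bw : Matrix ι π ℝ) (K : Matrix κ ι ℝ)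
    (CK : Matrix χ ι ℝ) (Dw : Matrix χ π ℝ) (Sw : Matrix π χ ℝ) (Qw : Matrix π π ℝ)
    (Rw : Matrix χ χ ℝ) (ρ η cx cu τ lam : ℝ) : Matrix ((ι ⊕ ι) ⊕ π) ((ι ⊕ ι) ⊕ π) ℝ :=
  lmiCore Pinv AK Bw CK Dw Sw Qw ρ η τ lam +
    (lmiOutput K CK Dw)ᵀ * lmiWeight (ι := ι) (κ := κ) Rw cx cu τ lam * lmiOutput K CK Dw

variable {Pinv AK : Matrix ι ι ℝ} {Bw : Matrix ι π ℝ} {K : Matrix κ ι ℝ}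
    {CK : Matrix χ ι ℝ} {Dw : Matrix χ π ℝ} {Sw : Matrix π χ ℝ} {Qw : Matrix π π ℝ}
    {Rw : Matrix χ χ ℝ} {ρ η cx cu τ lam : ℝ}

lemma sumElim_dotProduct_lmiCore_mulVec (hPinv : Pinv.IsSymm) (z r : ι → ℝ) (w : π → ℝ) :
    Sum.elim (Sum.elim z r) w ⬝ᵥ
        lmiCore Pinv AK Bw CK Dw Sw Qw ρ η τ lam *ᵥ Sum.elim (Sum.elim z r) w =
      2 * (z ⬝ᵥ Pinv *ᵥ (AK *ᵥ z + r + Bw *ᵥ w)) + ρ * (z ⬝ᵥ (Pinv * Pinv) *ᵥ z)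
        - 1 / τ * (r ⬝ᵥ r) + η / lam ^ 2 * (w ⬝ᵥ w)
        + 1 / lam * (w ⬝ᵥ Qw *ᵥ w + 2 * (w ⬝ᵥ Sw *ᵥ (CK *ᵥ z + Dw *ᵥ w))) := by
  rw [lmiCore, sumElim_dotProduct_blk33_mulVec_sumElim]
  simp only [add_mulVec, smul_mulVec, ← mulVec_mulVec, mulVec_add, dotProduct_add,
    dotProduct_smul, smul_eq_mul, zero_mulVec, dotProduct_zero, one_mulVec,
    dotProduct_transpose_mulVec]
  rw [dotProduct_comm (Pinv *ᵥ z), dotProduct_comm (Pinv *ᵥ z),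
    hPinv.dotProduct_mulVec_comm (AK *ᵥ z), hPinv.dotProduct_mulVec_comm (Bw *ᵥ w),
    hPinv.dotProduct_mulVec_comm r, dotProduct_comm (Swᵀ *ᵥ w), dotProduct_comm (Swᵀ *ᵥ w),
    dotProduct_transpose_mulVec, dotProduct_transpose_mulVec]
  ring

lemma sumElim_dotProduct_lmiWeight_mulVec (z : ι → ℝ) (u : κ → ℝ) (y : χ → ℝ) :
    Sum.elim (Sum.elim z u) y ⬝ᵥ lmiWeight Rw cx cu τ lam *ᵥ Sum.elim (Sum.elim z u) y =
      1 / τ * (2 * cx ^ 2 * (z ⬝ᵥ z) + 2 * cu ^ 2 * (u ⬝ᵥ u)) + 1 / lam * (y ⬝ᵥ Rw *ᵥ y) := by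
  rw [lmiWeight, sumElim_dotProduct_blk33_mulVec_sumElim]
  simp only [smul_mulVec, one_mulVec, zero_mulVec, add_zero, zero_add, dotProduct_smul,
    smul_eq_mul]
  ring

lemma dissipation_of_negSemidef_dissipationLMI (hPinv : Pinv.IsSymm) (hτ : 0 < τ)
    (hLMI : NegSemidef (dissipationLMI Pinv AK Bw K CK Dw Sw Qw Rw ρ η cx cu τ lam))
    {z r : ι → ℝ} {w : π → ℝ}
    (hr : r ⬝ᵥ r ≤ 2 * cx ^ 2 * (z ⬝ᵥ z) + 2 * cu ^ 2 * (K *ᵥ z ⬝ᵥ K *ᵥ z)) :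
    2 * (z ⬝ᵥ Pinv *ᵥ (AK *ᵥ z + r + Bw *ᵥ w)) ≤
      -ρ * (z ⬝ᵥ (Pinv * Pinv) *ᵥ z) - η / lam ^ 2 * (w ⬝ᵥ w)
        - 1 / lam * (w ⬝ᵥ Qw *ᵥ w + 2 * (w ⬝ᵥ Sw *ᵥ (CK *ᵥ z + Dw *ᵥ w))
          + (CK *ᵥ z + Dw *ᵥ w) ⬝ᵥ Rw *ᵥ (CK *ᵥ z + Dw *ᵥ w)) := by
  have hquad := hLMI.2 (Sum.elim (Sum.elim z r) w)
  rw [dissipationLMI, add_mulVec, dotProduct_add, ← mulVec_mulVec, ← mulVec_mulVec,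
    dotProduct_transpose_mulVec, dotProduct_comm (lmiWeight _ _ _ _ _ *ᵥ _),
    lmiOutput_mulVec_sumElim, sumElim_dotProduct_lmiWeight_mulVec,
    sumElim_dotProduct_lmiCore_mulVec hPinv] at hquad
  have hslack : 0 ≤ 1 / τ * (2 * cx ^ 2 * (z ⬝ᵥ z) + 2 * cu ^ 2 * (K *ᵥ z ⬝ᵥ K *ᵥ z) - r ⬝ᵥ r) :=
    mul_nonneg (by positivity) (sub_nonneg.mpr hr)
  linarith

end DissipationLMI

theorem stmt7_general (N n m p q : ℕ)
    (Dw : Matrix (Fin q) (Fin p) ℝ) (Sw : Matrix (Fin p) (Fin q) ℝ)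
    (P : Matrix (Fin N) (Fin N) ℝ) (hP : P.PosDef)
    (Qw : Matrix (Fin p) (Fin p) ℝ)
    (Rw : Matrix (Fin q) (Fin q) ℝ)
    (ρ η cx cu : ℝ)
    (K : (Fin N → ℝ) → Matrix (Fin m) (Fin N) ℝ)
    (τ lam : (Fin N → ℝ) → ℝ) (hτ : ∀ z, 0 < τ z)
    (Bw : (Fin N → ℝ) → Matrix (Fin N) (Fin p) ℝ)
    (AK : (Fin N → ℝ) → Matrix (Fin N) (Fin N) ℝ)
    (CK : (Fin N → ℝ) → Matrix (Fin q) (Fin N) ℝ)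
    (hLMI : ∀ z : Fin N → ℝ, NegSemidef
      ((blk33
        (P⁻¹ * AK z + (AK z)ᵀ * P⁻¹ + ρ • (P⁻¹ * P⁻¹)) P⁻¹
          (P⁻¹ * Bw z + (1 / lam z) • ((CK z)ᵀ * Swᵀ))
        P⁻¹ ((-(1 / τ z)) • (1 : Matrix (Fin N) (Fin N) ℝ)) 0
        ((Bw z)ᵀ * P⁻¹ + (1 / lam z) • (Sw * CK z)) 0
          ((1 / lam z) • (Qw + Sw * Dw + Dwᵀ * Swᵀ) +
            (η / lam z ^ 2) • (1 : Matrix (Fin p) (Fin p) ℝ))) +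
      (blk33
        (1 : Matrix (Fin N) (Fin N) ℝ) 0 0
        (K z) 0 0
        (CK z) 0 Dw)ᵀ *
      (blk33
        ((2 * cx ^ 2 / τ z) • (1 : Matrix (Fin N) (Fin N) ℝ)) 0 0
        0 ((2 * cu ^ 2 / τ z) • (1 : Matrix (Fin m) (Fin m) ℝ)) 0
        0 0 ((1 / lam z) • Rw)) *
      (blk33
        (1 : Matrix (Fin N) (Fin N) ℝ) 0 0
        (K z) 0 0
        (CK z) 0 Dw)))
    (Φ : (Fin n → ℝ) → (Fin N → ℝ))
    (x : ℝ → Fin n → ℝ) (w : ℝ → Fin p → ℝ) (r : ℝ → Fin N → ℝ)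
    (hdyn : ∀ t : ℝ, 0 ≤ t → HasDerivWithinAt (fun s => Φ (x s))
      ((AK (Φ (x t))).mulVec (Φ (x t)) + r t + (Bw (Φ (x t))).mulVec (w t)) (Set.Ici 0) t)
    (hr : ∀ t : ℝ, 0 ≤ t →
      eucNorm (r t) ≤ cx * eucNorm (Φ (x t)) + cu * eucNorm ((K (Φ (x t))).mulVec (Φ (x t))))
    (y : ℝ → Fin q → ℝ)
    (hy : ∀ t, y t = (CK (Φ (x t))).mulVec (Φ (x t)) + Dw.mulVec (w t)) :
    ∀ t : ℝ, 0 ≤ t → ∃ d : ℝ,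
      HasDerivWithinAt (fun s => Φ (x s) ⬝ᵥ (P⁻¹).mulVec (Φ (x s))) d (Set.Ici 0) t ∧
      d ≤ -ρ * (Φ (x t) ⬝ᵥ (P⁻¹ * P⁻¹).mulVec (Φ (x t)))
            - (η / lam (Φ (x t)) ^ 2) * eucNorm (w t) ^ 2
            - (1 / lam (Φ (x t))) * (w t ⬝ᵥ Qw.mulVec (w t) + 2 * (w t ⬝ᵥ Sw.mulVec (y t))
                + y t ⬝ᵥ Rw.mulVec (y t)) := by
  intro t ht
  have hPinv : (P⁻¹).IsSymm := isHermitian_iff_isSymm.mp hP.isHermitian.inv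
  refine ⟨_, (hdyn t ht).dotProduct_mulVec_self hPinv, ?_⟩
  rw [eucNorm_sq, hy]
  exact dissipation_of_negSemidef_dissipationLMI hPinv (hτ _) (hLMI _)
    (dotProduct_self_le_of_eucNorm_le_add (hr t ht))

theorem stmt7 (N n m p q : ℕ) (hN : 1 ≤ N) (hn : 1 ≤ n) (hm : 1 ≤ m) (hp : 1 ≤ p)
    (hq : 1 ≤ q)
    (A : Matrix (Fin N) (Fin N) ℝ) (B0 : Matrix (Fin N) (Fin m) ℝ)
    (Bt : Matrix (Fin N) (Fin m × Fin N) ℝ)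
    (C : Matrix (Fin q) (Fin N) ℝ) (D : Matrix (Fin q) (Fin m) ℝ)
    (Dt : Matrix (Fin q) (Fin m × Fin N) ℝ)
    (Dw : Matrix (Fin q) (Fin p) ℝ) (Sw : Matrix (Fin p) (Fin q) ℝ)
    (P : Matrix (Fin N) (Fin N) ℝ) (hP : P.PosDef)
    (Qw : Matrix (Fin p) (Fin p) ℝ) (hQw : Qw.IsHermitian)
    (Rw : Matrix (Fin q) (Fin q) ℝ) (hRw : Rw.PosSemidef)
    (ρ η cx cu : ℝ) (hρ : 0 ≤ ρ) (hη : 0 ≤ η) (hcx : 0 < cx) (hcu : 0 < cu)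
    (K : (Fin N → ℝ) → Matrix (Fin m) (Fin N) ℝ)
    (τ lam : (Fin N → ℝ) → ℝ) (hτ : ∀ z, 0 < τ z) (hlam : ∀ z, 0 < lam z)
    (Bw : (Fin N → ℝ) → Matrix (Fin N) (Fin p) ℝ)
    (AK : (Fin N → ℝ) → Matrix (Fin N) (Fin N) ℝ)
    (hAK : ∀ z, AK z = A + B0 * K z + Bt * kronMV (K z) z)
    (CK : (Fin N → ℝ) → Matrix (Fin q) (Fin N) ℝ)
    (hCK : ∀ z, CK z = C + D * K z + Dt * kronMV (K z) z)
    (hLMI : ∀ z : Fin N → ℝ, NegSemidef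
      ((blk33
        (P⁻¹ * AK z + (AK z)ᵀ * P⁻¹ + ρ • (P⁻¹ * P⁻¹)) P⁻¹
          (P⁻¹ * Bw z + (1 / lam z) • ((CK z)ᵀ * Swᵀ))
        P⁻¹ ((-(1 / τ z)) • (1 : Matrix (Fin N) (Fin N) ℝ)) 0
        ((Bw z)ᵀ * P⁻¹ + (1 / lam z) • (Sw * CK z)) 0
          ((1 / lam z) • (Qw + Sw * Dw + Dwᵀ * Swᵀ) +
            (η / lam z ^ 2) • (1 : Matrix (Fin p) (Fin p) ℝ))) +
      (blk33
        (1 : Matrix (Fin N) (Fin N) ℝ) 0 0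
        (K z) 0 0
        (CK z) 0 Dw)ᵀ *
      (blk33
        ((2 * cx ^ 2 / τ z) • (1 : Matrix (Fin N) (Fin N) ℝ)) 0 0
        0 ((2 * cu ^ 2 / τ z) • (1 : Matrix (Fin m) (Fin m) ℝ)) 0
        0 0 ((1 / lam z) • Rw)) *
      (blk33
        (1 : Matrix (Fin N) (Fin N) ℝ) 0 0
        (K z) 0 0
        (CK z) 0 Dw)))
    (Φ : (Fin n → ℝ) → (Fin N → ℝ))
    (x : ℝ → Fin n → ℝ) (w : ℝ → Fin p → ℝ) (r : ℝ → Fin N → ℝ)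
    (hdyn : ∀ t : ℝ, 0 ≤ t → HasDerivWithinAt (fun s => Φ (x s))
      ((AK (Φ (x t))).mulVec (Φ (x t)) + r t + (Bw (Φ (x t))).mulVec (w t)) (Set.Ici 0) t)
    (hr : ∀ t : ℝ, 0 ≤ t →
      eucNorm (r t) ≤ cx * eucNorm (Φ (x t)) + cu * eucNorm ((K (Φ (x t))).mulVec (Φ (x t))))
    (y : ℝ → Fin q → ℝ)
    (hy : ∀ t, y t = (CK (Φ (x t))).mulVec (Φ (x t)) + Dw.mulVec (w t)) :
    ∀ t : ℝ, 0 ≤ t → ∃ d : ℝ,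
      HasDerivWithinAt (fun s => Φ (x s) ⬝ᵥ (P⁻¹).mulVec (Φ (x s))) d (Set.Ici 0) t ∧
      d ≤ -ρ * (Φ (x t) ⬝ᵥ (P⁻¹ * P⁻¹).mulVec (Φ (x t)))
            - (η / lam (Φ (x t)) ^ 2) * eucNorm (w t) ^ 2
            - (1 / lam (Φ (x t))) * (w t ⬝ᵥ Qw.mulVec (w t) + 2 * (w t ⬝ᵥ Sw.mulVec (y t))
                + y t ⬝ᵥ Rw.mulVec (y t)) :=
  stmt7_general N n m p q Dw Sw P hP Qw Rw ρ η cx cu K τ lam hτ Bw AK CK hLMI Φ x w r hdyn hr y hy
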